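/- Let K be the field of fractions of ℚ[x₀,x₁,x₂,x₃,x₄,x₅], set A = (x₂x₄+x₃x₅)/(x₀x₁), B = (x₁x₄+x₀x₅)/(x₂x₃), C = (x₀x₂+x₁x₃)/(x₄x₅), and let τ'₁, τ'₂, τ'₃ be the maps on K⁶ defined by: τ'₁ replaces (v₀,v₁) by ((v₂v₄+v₃v₅)/v₁, (v₂v₄+v₃v₅)/v₀); τ'₂ replaces (v₂,v₃) by ((v₁v₄+v₀v₅)/v₃, (v₁v₄+v₀v₅)/v₂); τ'₃ replaces (v₄,v₅) by ((v₀v₂+v₁v₃)/v₅, (v₀v₂+v₁v₃)/v₄); each fixes the remaining entries. For natural numbers s, t, let w be the word consisting of the block (1,2,3) repeated 2t times, then the letters (1,2), then the block (1,3,2) repeated 2s times, and let v be the result of applying the maps to X = (x₀,…,x₅) in left-to-right order along w. Then v₀ = x₀·A^{3s²+3st+3t²+3t+1}·B^{3s²+3st+3t²+s+2t}·C^{3s²+3st+3t²−s+t} and v₁ = x₁ times the same monomial in A, B, C. -/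

import Mathlib

noncomputable section

/-- The polynomial ring ℚ[x₀,…,x₅]. -/
abbrev P : Type := MvPolynomial (Fin 6) ℚ

/-- K = Frac(ℚ[x₀,…,x₅]). -/
abbrev K : Type := FractionRing P

/-- The images of the variables x₀,…,x₅ in K. -/
def x (i : Fin 6) : K := algebraMap P K (MvPolynomial.X i)

/-- τ'₁ : replaces (v₀, v₁) by ((v₂v₄+v₃v₅)/v₁, (v₂v₄+v₃v₅)/v₀). -/
def tau1 (v : Fin 6 → K) : Fin 6 → K := fun k =>
  if k = 0 then (v 2 * v 4 + v 3 * v 5) / v 1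
  else if k = 1 then (v 2 * v 4 + v 3 * v 5) / v 0
  else v k

/-- τ'₂ : replaces (v₂, v₃) by ((v₁v₄+v₀v₅)/v₃, (v₁v₄+v₀v₅)/v₂). -/
def tau2 (v : Fin 6 → K) : Fin 6 → K := fun k =>
  if k = 2 then (v 1 * v 4 + v 0 * v 5) / v 3
  else if k = 3 then (v 1 * v 4 + v 0 * v 5) / v 2
  else v k

/-- τ'₃ : replaces (v₄, v₅) by ((v₀v₂+v₁v₃)/v₅, (v₀v₂+v₁v₃)/v₄). -/
def tau3 (v : Fin 6 → K) : Fin 6 → K := fun k =>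
  if k = 4 then (v 0 * v 2 + v 1 * v 3) / v 5
  else if k = 5 then (v 0 * v 2 + v 1 * v 3) / v 4
  else v k

/-- τ' indexed by Fin 3: `tau i` is τ'_{i+1}. -/
def tau : Fin 3 → (Fin 6 → K) → (Fin 6 → K)
  | 0 => tau1
  | 1 => tau2
  | 2 => tau3

/-- The initial labeled seed X = (x₀,…,x₅). -/
def X0 : Fin 6 → K := x

/-- Apply the maps τ'₍a₁₎, …, τ'₍aₙ₎ along the word `w` in left-to-right order. -/
def applyWord (w : List (Fin 3)) (v : Fin 6 → K) : Fin 6 → K :=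
  w.foldl (fun u a => tau a u) v

/-- A = (x₂x₄+x₃x₅)/(x₀x₁). -/
def A : K := (x 2 * x 4 + x 3 * x 5) / (x 0 * x 1)

/-- B = (x₁x₄+x₀x₅)/(x₂x₃). -/
def B : K := (x 1 * x 4 + x 0 * x 5) / (x 2 * x 3)

/-- C = (x₀x₂+x₁x₃)/(x₄x₅). -/
def C : K := (x 0 * x 2 + x 1 * x 3) / (x 4 * x 5)

/-- The canonical path (123)^{2t} (12) (132)^{2s} to the even alcove (3s, 3t+1)
(letters 1,2,3 are encoded as 0,1,2 in `Fin 3`). -/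
def word8 (s t : ℕ) : List (Fin 3) :=
  (List.replicate (2 * t) ([0, 1, 2] : List (Fin 3))).flatten ++
    ([0, 1] : List (Fin 3)) ++
    (List.replicate (2 * s) ([0, 2, 1] : List (Fin 3))).flatten

/-! Every seed on the path is a monomial seed: `v k = x k · A^a B^b C^c`, with one monomial
for each antipodal pair `{2i, 2i+1}`. By the exchange relations `x₂x₄ + x₃x₅ = A·x₀x₁` etc.,
`τ'ᵢ` maps a monomial seed to a monomial seed, replacing the exponent vector `eᵢ ∈ ℤ³` of the
i-th pair by `e_{i+1} + e_{i+2} - eᵢ + δᵢ`. This reduces the theorem to affine dynamics on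
`3 × 3` integer exponent matrices, in which each double block `(123)(123)`, resp.
`(132)(132)`, advances a closed form quadratic in `t`, resp. `s`, by one step. -/

lemma algebraMap_ne_zero_of_eval_one {p : P} (hp : MvPolynomial.eval 1 p ≠ 0) :
    algebraMap P K p ≠ 0 :=
  (map_ne_zero_iff _ (IsFractionRing.injective P K)).mpr fun h => hp (by rw [h, map_zero])

lemma x_ne_zero (i : Fin 6) : x i ≠ 0 :=
  algebraMap_ne_zero_of_eval_one (by simp)

lemma x_mul_add_x_mul_ne_zero (a b c d : Fin 6) : x a * x b + x c * x d ≠ 0 := by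
  have h := algebraMap_ne_zero_of_eval_one (p := .X a * .X b + .X c * .X d) (by norm_num)
  simpa [x] using h

lemma A_ne_zero : A ≠ 0 :=
  div_ne_zero (x_mul_add_x_mul_ne_zero 2 4 3 5) (mul_ne_zero (x_ne_zero 0) (x_ne_zero 1))

lemma B_ne_zero : B ≠ 0 :=
  div_ne_zero (x_mul_add_x_mul_ne_zero 1 4 0 5) (mul_ne_zero (x_ne_zero 2) (x_ne_zero 3))

lemma C_ne_zero : C ≠ 0 :=
  div_ne_zero (x_mul_add_x_mul_ne_zero 0 2 1 3) (mul_ne_zero (x_ne_zero 4) (x_ne_zero 5))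

def monoABC (e : Fin 3 → ℤ) : K := A ^ e 0 * B ^ e 1 * C ^ e 2

lemma monoABC_ne_zero (e : Fin 3 → ℤ) : monoABC e ≠ 0 := by
  have := A_ne_zero
  have := B_ne_zero
  have := C_ne_zero
  unfold monoABC
  positivity

lemma monoABC_add (e f : Fin 3 → ℤ) : monoABC (e + f) = monoABC e * monoABC f := by
  simp only [monoABC, Pi.add_apply, zpow_add₀ A_ne_zero, zpow_add₀ B_ne_zero,
    zpow_add₀ C_ne_zero]
  ring

lemma monoABC_sub (e f : Fin 3 → ℤ) : monoABC (e - f) = monoABC e / monoABC f := by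
  rw [eq_div_iff (monoABC_ne_zero f), ← monoABC_add, sub_add_cancel]

lemma monoABC_single_zero : monoABC (Pi.single 0 1) = A := by simp [monoABC]

lemma monoABC_single_one : monoABC (Pi.single 1 1) = B := by simp [monoABC]

lemma monoABC_single_two : monoABC (Pi.single 2 1) = C := by simp [monoABC]

def seed (E : Fin 3 → Fin 3 → ℤ) : Fin 6 → K :=
  fun k => x k * monoABC (![E 0, E 0, E 1, E 1, E 2, E 2] k)

lemma X0_eq_seed_zero : X0 = seed 0 := by
  funext k
  fin_cases k <;> simp [X0, seed, monoABC]

def mutateExp (i : Fin 3) (E : Fin 3 → Fin 3 → ℤ) : Fin 3 → Fin 3 → ℤ :=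
  Function.update E i (E (i + 1) + E (i + 2) - E i + Pi.single i 1)

lemma tau_seed (i : Fin 3) (E : Fin 3 → Fin 3 → ℤ) :
    tau i (seed E) = seed (mutateExp i E) := by
  funext k
  fin_cases i <;> fin_cases k <;>
    simp [tau, tau1, tau2, tau3, seed, mutateExp, monoABC_add, monoABC_sub, monoABC_single_zero,
      monoABC_single_one, monoABC_single_two, A, B, C] <;>
    field_simp [x_ne_zero, monoABC_ne_zero]

def mutateExpWord (w : List (Fin 3)) (E : Fin 3 → Fin 3 → ℤ) : Fin 3 → Fin 3 → ℤ :=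
  w.foldl (fun E i => mutateExp i E) E

lemma applyWord_seed (w : List (Fin 3)) (E : Fin 3 → Fin 3 → ℤ) :
    applyWord w (seed E) = seed (mutateExpWord w E) :=
  List.foldl_hom seed fun E i => tau_seed i E

lemma mutateExpWord_append (w w' : List (Fin 3)) (E : Fin 3 → Fin 3 → ℤ) :
    mutateExpWord (w ++ w') E = mutateExpWord w' (mutateExpWord w E) :=
  List.foldl_append

lemma mutateExpWord_flatten_replicate (n : ℕ) (w : List (Fin 3)) (E : Fin 3 → Fin 3 → ℤ) :
    mutateExpWord (List.replicate n w).flatten E = (mutateExpWord w)^[n] E := by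
  induction n generalizing E with
  | zero => rfl
  | succ n ih =>
    rw [List.replicate_succ, List.flatten_cons, mutateExpWord_append, ih,
      Function.iterate_succ_apply]

lemma Function.iterate_eq_of_map_eq_succ {α : Type*} {f : α → α} {g : ℤ → α}
    (h : ∀ z, f (g z) = g (z + 1)) (n : ℕ) : f^[n] (g 0) = g n := by
  induction n with
  | zero => rfl
  | succ n ih => rw [Function.iterate_succ_apply', ih, h, Nat.cast_succ]

def blockExp (t : ℤ) : Fin 3 → Fin 3 → ℤ := fun i j => 3 * t ^ 2 + ((i : ℤ) - j) * t

lemma blockExp_zero : blockExp 0 = 0 := by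
  funext i j
  simp [blockExp]

def alcoveExp (s t : ℤ) : Fin 3 → Fin 3 → ℤ :=
  let N := 3 * s ^ 2 + 3 * s * t + 3 * t ^ 2
  ![![N + 3 * t + 1, N + s + 2 * t, N - s + t],
    ![N + 2 * s + 4 * t + 1, N + 3 * s + 3 * t + 1, N + s + 2 * t],
    ![N + s + 2 * t, N + 2 * s + t, N]]

lemma mutateExpWord_123_123_blockExp (t : ℤ) :
    (mutateExpWord [0, 1, 2])^[2] (blockExp t) = blockExp (t + 1) := by
  funext i j
  fin_cases i <;> fin_cases j <;>
    simp [mutateExpWord, mutateExp, blockExp, Function.update] <;> ring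

lemma mutateExpWord_12_blockExp (t : ℤ) :
    mutateExpWord [0, 1] (blockExp t) = alcoveExp 0 t := by
  funext i j
  fin_cases i <;> fin_cases j <;>
    simp [mutateExpWord, mutateExp, blockExp, alcoveExp, Function.update] <;> ring

lemma mutateExpWord_132_132_alcoveExp (s t : ℤ) :
    (mutateExpWord [0, 2, 1])^[2] (alcoveExp s t) = alcoveExp (s + 1) t := by
  funext i j
  fin_cases i <;> fin_cases j <;>
    simp [mutateExpWord, mutateExp, alcoveExp, Function.update, Matrix.vecHead,
      Matrix.vecTail] <;> ring

lemma mutateExpWord_word8 (s t : ℕ) : mutateExpWord (word8 s t) 0 = alcoveExp s t := by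
  have blocks : (mutateExpWord [0, 1, 2])^[2 * t] 0 = blockExp t := by
    rw [Function.iterate_mul, ← blockExp_zero]
    exact Function.iterate_eq_of_map_eq_succ mutateExpWord_123_123_blockExp t
  have ascent : (mutateExpWord [0, 2, 1])^[2 * s] (alcoveExp 0 t) = alcoveExp s t := by
    rw [Function.iterate_mul]
    exact Function.iterate_eq_of_map_eq_succ (g := (alcoveExp · t))
      (fun s => mutateExpWord_132_132_alcoveExp s t) s
  rw [word8, mutateExpWord_append, mutateExpWord_append, mutateExpWord_flatten_replicate,
    mutateExpWord_flatten_replicate, blocks, mutateExpWord_12_blockExp, ascent]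

/-- Theorem 2.1, case |i| ≡ 0 mod 6, |j| ≡ 1 mod 3, i = 6s, j = 3t+1:
the vertex-0 and vertex-1 cluster variables at the corresponding even alcove. -/
theorem alcove_even_01 (s t : ℕ) :
    applyWord (word8 s t) X0 0 =
      x 0 * A ^ (3 * (s : ℤ) ^ 2 + 3 * s * t + 3 * t ^ 2 + 3 * t + 1)
          * B ^ (3 * (s : ℤ) ^ 2 + 3 * s * t + 3 * t ^ 2 + s + 2 * t)
          * C ^ (3 * (s : ℤ) ^ 2 + 3 * s * t + 3 * t ^ 2 - s + t) ∧
    applyWord (word8 s t) X0 1 =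
      x 1 * A ^ (3 * (s : ℤ) ^ 2 + 3 * s * t + 3 * t ^ 2 + 3 * t + 1)
          * B ^ (3 * (s : ℤ) ^ 2 + 3 * s * t + 3 * t ^ 2 + s + 2 * t)
          * C ^ (3 * (s : ℤ) ^ 2 + 3 * s * t + 3 * t ^ 2 - s + t) := by
  rw [X0_eq_seed_zero, applyWord_seed, mutateExpWord_word8]
  constructor <;> simp [seed, monoABC, alcoveExp, mul_assoc]
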